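/- Let k1 ≤ k2 ≤ k3 ≤ k4 be integers with each ki ≥ 3, at most two of them equal to 3, and k1+k2+k3+k4 ≥ 18. Then (k1-3)/k1 + (k2-3)/k2 + (k3-3)/k3 + (k4-3)/k4 < 1 (as rational numbers) if and only if (k1,k2,k3,k4) is one of (3,3,4,8), (3,3,4,9), (3,3,4,10), (3,3,4,11), (3,3,5,7). -/

import Mathlib

/-!
Since `(k - 3)/k = 1 - 3/k`, the inequality says `1/k₁ + 1/k₂ + 1/k₃ + 1/k₄ > 1`.
With all `kᵢ ≥ 3` this forces `k₃ ≤ 5` (else the sum is at most `1/3 + 1/3 + 1/6 + 1/6`)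
and then `k₄ ≤ 11` (else it is at most `1/3 + 1/3 + 1/4 + 1/12`), leaving finitely many
tuples to inspect.
-/

theorem sub_three_div_add_lt_one_iff {K : Type*} [Field K] [LinearOrder K]
    [IsStrictOrderedRing K] {a b c d : K} (ha : a ≠ 0) (hb : b ≠ 0) (hc : c ≠ 0)
    (hd : d ≠ 0) :
    (a - 3) / a + (b - 3) / b + (c - 3) / c + (d - 3) / d < 1 ↔
      1 < 1 / a + 1 / b + 1 / c + 1 / d := by
  have sub_three_div {x : K} (hx : x ≠ 0) : (x - 3) / x = 1 - 3 * (1 / x) := by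
    field_simp
  rw [sub_three_div ha, sub_three_div hb, sub_three_div hc, sub_three_div hd]
  constructor <;> intro h <;> linarith

theorem one_div_intCast_le_one_div {m x : ℤ} (hm : 0 < m) (h : m ≤ x) :
    (1 : ℚ) / x ≤ 1 / m :=
  one_div_le_one_div_of_le (by exact_mod_cast hm) (by exact_mod_cast h)

theorem one_lt_sum_one_div_iff (a b c d : ℤ) (hab : a ≤ b) (hbc : b ≤ c) (hcd : c ≤ d)
    (ha : 3 ≤ a) (hc : 4 ≤ c) (hsum : 18 ≤ a + b + c + d) :
    1 < (1 / a + 1 / b + 1 / c + 1 / d : ℚ) ↔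
      (a, b, c, d) = (3, 3, 4, 8) ∨ (a, b, c, d) = (3, 3, 4, 9) ∨
      (a, b, c, d) = (3, 3, 4, 10) ∨ (a, b, c, d) = (3, 3, 4, 11) ∨
      (a, b, c, d) = (3, 3, 5, 7) := by
  constructor
  · intro h
    have hb : 3 ≤ b := ha.trans hab
    have ha' := one_div_intCast_le_one_div (by norm_num) ha
    have hb' := one_div_intCast_le_one_div (by norm_num) hb
    have hc_le : c ≤ 5 := by
      by_contra! hc6
      have hc' := one_div_intCast_le_one_div (by norm_num) (show 6 ≤ c by omega)
      have hd' := one_div_intCast_le_one_div (by norm_num) (show 6 ≤ d by omega)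
      push_cast at ha' hb' hc' hd'
      linarith
    have hd_le : d ≤ 11 := by
      by_contra! hd12
      have hc' := one_div_intCast_le_one_div (by norm_num) hc
      have hd' := one_div_intCast_le_one_div (by norm_num) (show 12 ≤ d by omega)
      push_cast at ha' hb' hc' hd'
      linarith
    have hb_le : b ≤ 5 := hbc.trans hc_le
    have ha_le : a ≤ 5 := hab.trans hb_le
    revert h hsum
    interval_cases c <;> interval_cases b <;> interval_cases a <;> interval_cases d <;> norm_num
  · rintro (h | h | h | h | h) <;> simp only [Prod.mk.injEq] at h <;>
      obtain ⟨rfl, rfl, rfl, rfl⟩ := h <;> norm_num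

theorem stmt_0_general (k1 k2 k3 k4 : ℤ)
    (h12 : k1 ≤ k2) (h23 : k2 ≤ k3) (h34 : k3 ≤ k4)
    (h1 : 3 ≤ k1)
    (htwo : 4 ≤ k3)
    (hsum : 18 ≤ k1 + k2 + k3 + k4) :
    ((k1 : ℚ) - 3) / k1 + ((k2 : ℚ) - 3) / k2 + ((k3 : ℚ) - 3) / k3 +
        ((k4 : ℚ) - 3) / k4 < 1 ↔
      (k1, k2, k3, k4) = (3, 3, 4, 8) ∨ (k1, k2, k3, k4) = (3, 3, 4, 9) ∨
      (k1, k2, k3, k4) = (3, 3, 4, 10) ∨ (k1, k2, k3, k4) = (3, 3, 4, 11) ∨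
      (k1, k2, k3, k4) = (3, 3, 5, 7) := by
  have ne_zero {k : ℤ} (hk : k1 ≤ k) : (k : ℚ) ≠ 0 := by
    exact_mod_cast (show k ≠ 0 by omega)
  rw [sub_three_div_add_lt_one_iff (ne_zero le_rfl) (ne_zero h12) (ne_zero (h12.trans h23))
    (ne_zero (h12.trans (h23.trans h34)))]
  exact one_lt_sum_one_div_iff k1 k2 k3 k4 h12 h23 h34 h1 htwo hsum

/-- Classification of sorted 4-tuples of integers (each ≥ 3, at most two equal to 3,
sum ≥ 18) whose sum of (kᵢ-3)/kᵢ is less than 1. -/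
theorem stmt_0 (k1 k2 k3 k4 : ℤ)
    (h12 : k1 ≤ k2) (h23 : k2 ≤ k3) (h34 : k3 ≤ k4)
    (h1 : 3 ≤ k1) (h2 : 3 ≤ k2) (h3 : 3 ≤ k3) (h4 : 3 ≤ k4)
    (htwo : 4 ≤ k3)
    (hsum : 18 ≤ k1 + k2 + k3 + k4) :
    ((k1 : ℚ) - 3) / k1 + ((k2 : ℚ) - 3) / k2 + ((k3 : ℚ) - 3) / k3 +
        ((k4 : ℚ) - 3) / k4 < 1 ↔
      (k1, k2, k3, k4) = (3, 3, 4, 8) ∨ (k1, k2, k3, k4) = (3, 3, 4, 9) ∨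
      (k1, k2, k3, k4) = (3, 3, 4, 10) ∨ (k1, k2, k3, k4) = (3, 3, 4, 11) ∨
      (k1, k2, k3, k4) = (3, 3, 5, 7) :=
  stmt_0_general k1 k2 k3 k4 h12 h23 h34 h1 htwo hsum
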